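/- For every digraph D and every total order ≺ on V(D), the following two inequalities hold: χ⃗(D) ≤ χ(D^≺) and χ(D^≺) ≤ R(ω(D^≺)+1, α(D)+1) · χ⃗(D), where R(i, j) denotes the Ramsey number. -/

import Mathlib

structure Dig (V : Type*) where
  Adj : V → V → Prop
  irrefl : ∀ v, ¬ Adj v v
  asymm : ∀ u v, Adj u v → ¬ Adj v u

structure Tournament (V : Type*) extends Dig V where
  total : ∀ u v, u ≠ v → Adj u v ∨ Adj v u

variable {V : Type*}

/-- The backedge graph of a digraph with respect to a (strict total) order `r`:
`u` and `v` are adjacent iff the arc between them goes backwards with respect to `r`. -/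
def Dig.backedge (D : Dig V) (r : V → V → Prop) : SimpleGraph V where
  Adj u v := (r u v ∧ D.Adj v u) ∨ (r v u ∧ D.Adj u v)
  symm := ⟨by intro u v h; tauto⟩
  loopless := ⟨by intro v h; rcases h with ⟨_, h⟩ | ⟨_, h⟩ <;> exact D.irrefl v h⟩

/-- The clique number of an undirected graph. -/
noncomputable def gOmega (G : SimpleGraph V) : ℕ :=
  sSup {n | ∃ s : Finset V, G.IsNClique n s}

/-- The chromatic number of an undirected graph (as a natural number). -/
noncomputable def gChi (G : SimpleGraph V) : ℕ :=
  sInf {n | G.Colorable n}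

/-- The sub-digraph induced on `S` is acyclic: there is no directed cycle inside `S`. -/
def Dig.AcyclicOn (D : Dig V) (S : Set V) : Prop :=
  ∀ v, ¬ Relation.TransGen (fun x y => x ∈ S ∧ y ∈ S ∧ D.Adj x y) v v

/-- The dichromatic number: the least `n` such that the vertices can be partitioned into
`n` acyclic parts. -/
noncomputable def Dig.dichi (D : Dig V) : ℕ :=
  sInf {n | ∃ c : V → Fin n, ∀ i, D.AcyclicOn {v | c v = i}}

/-- The clique number of a digraph: the minimum over all strict total orders of the
clique number of the associated backedge graph. -/
noncomputable def Dig.cliqueNum (D : Dig V) : ℕ :=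
  sInf {m | ∃ r : V → V → Prop, IsStrictTotalOrder V r ∧ gOmega (D.backedge r) = m}

/-- The Ramsey number `R i j`: the least `n` such that every graph on `n` vertices contains
a clique of size `j` or an independent set of size `i`. -/
noncomputable def ramsey (i j : ℕ) : ℕ :=
  sInf {n | ∀ G : SimpleGraph (Fin n),
    (∃ s : Finset (Fin n), G.IsNClique j s) ∨
    (∃ s : Finset (Fin n), s.card = i ∧ ∀ a ∈ s, ∀ b ∈ s, a ≠ b → ¬ G.Adj a b)}

/-- The independence number of a digraph: the maximum size of a set of pairwise
non-adjacent vertices. -/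
noncomputable def Dig.alpha (D : Dig V) : ℕ :=
  sSup {m | ∃ s : Finset V, s.card = m ∧ ∀ a ∈ s, ∀ b ∈ s, ¬ D.Adj a b}
/-! Every arc inside a colour class of a proper colouring of `D^≺` goes forward, so the class is
acyclic; this gives `χ⃗(D) ≤ χ(D^≺)`.

Conversely, fix an acyclic colouring `c` of `D` with `χ⃗(D)` colours. Reachability by backward arcs
inside one class of `c` is a strict partial order, and two vertices of a class that are adjacent in
`D^≺` are comparable. In a chain of this order every arc of `D` goes backward, so by Ramsey's
theorem `R(ω(D^≺)+1, α(D)+1)` vertices of a chain would contain `α(D)+1` pairwise non-adjacent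
vertices or an `(ω(D^≺)+1)`-clique of `D^≺`. Hence the height in this order takes fewer values than
that (Mirsky), and the pair (height, colour) properly colours `D^≺`. -/

open Finset SimpleGraph Order

theorem exists_strictMono_fin_of_card_chain_le {α : Type*} [Preorder α] {n : ℕ}
    (h : ∀ k (f : Fin k → α), StrictMono f → k ≤ n) : ∃ g : α → Fin n, StrictMono g := by
  have hlt (a : α) : height a < n := by
    by_contra! hle
    obtain ⟨p, -, hp⟩ := exists_series_of_le_height a hle
    have := h _ p p.strictMono
    omega
  have hfin (a : α) : height a < ⊤ := (hlt a).trans (ENat.natCast_lt_top n)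
  refine ⟨fun a => ⟨(height a).lift (hfin a), ENat.lift_lt_iff.2 (hlt a)⟩, fun a b hab => ?_⟩
  rw [Fin.mk_lt_mk, ENat.lt_lift_iff, ENat.natCast_lift]
  exact height_strictMono hab (hfin a)

namespace SimpleGraph

variable {α β : Type*}

theorem exists_subset_isNClique_or_isNIndepSet (G : SimpleGraph α) :
    ∀ (i j : ℕ) (s : Finset α), (i + j).choose i ≤ #s →
      ∃ t ⊆ s, G.IsNClique j t ∨ G.IsNIndepSet i t := by
  classical
  intro i
  induction i with
  | zero => exact fun _ _ _ => ⟨∅, empty_subset _, Or.inr (by simp [isNIndepSet_iff])⟩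
  | succ i ihi =>
    intro j
    induction j with
    | zero => exact fun _ _ => ⟨∅, empty_subset _, Or.inl (isNClique_empty.2 rfl)⟩
    | succ j ihj =>
      intro s hs
      obtain ⟨v, hv⟩ : s.Nonempty := card_pos.1 ((Nat.choose_pos (by omega)).trans_le hs)
      set N := (s.erase v).filter (G.Adj v)
      set M := (s.erase v).filter fun w => ¬ G.Adj v w
      have hNs : N ⊆ s := (filter_subset _ _).trans (erase_subset _ _)
      have hMs : M ⊆ s := (filter_subset _ _).trans (erase_subset _ _)
      have hcard : #N + #M + 1 = #s := by
        rw [card_filter_add_card_filter_not, card_erase_add_one hv]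
      have hpascal : (i + 1 + (j + 1)).choose (i + 1) =
          (i + 1 + j).choose (i + 1) + (i + (j + 1)).choose i := by
        rw [show i + 1 + (j + 1) = i + j + 1 + 1 by omega, Nat.choose_succ_succ,
          show i + 1 + j = i + j + 1 by omega, show i + (j + 1) = i + j + 1 by omega, add_comm]
      by_cases hN : (i + 1 + j).choose (i + 1) ≤ #N
      · obtain ⟨t, htN, hc | hi⟩ := ihj N hN
        · refine ⟨insert v t, insert_subset hv (htN.trans hNs), Or.inl (hc.insert ?_)⟩
          exact fun w hw => (mem_filter.1 (htN hw)).2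
        · exact ⟨t, htN.trans hNs, Or.inr hi⟩
      · obtain ⟨t, htM, hc | hi⟩ := ihi (j + 1) M (by omega)
        · exact ⟨t, htM.trans hMs, Or.inl hc⟩
        · refine ⟨insert v t, insert_subset hv (htM.trans hMs), Or.inr ?_⟩
          rw [← isNClique_compl] at hi ⊢
          refine hi.insert fun w hw => ?_
          obtain ⟨hws, hvw⟩ := mem_filter.1 (htM hw)
          exact (compl_adj G v w).2 ⟨(ne_of_mem_erase hws).symm, hvw⟩

theorem IsNIndepSet.map_of_comap {G : SimpleGraph β} {f : α ↪ β} {n : ℕ} {s : Finset α}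
    (h : (G.comap f).IsNIndepSet n s) : G.IsNIndepSet n (s.map f) :=
  ⟨by rw [coe_map, IsIndepSet, f.injective.injOn.pairwise_image]; exact h.isIndepSet,
    by rw [card_map, h.card_eq]⟩

theorem IsNClique.map_of_comap {G : SimpleGraph β} {f : α ↪ β} {n : ℕ} {s : Finset α}
    (h : (G.comap f).IsNClique n s) : G.IsNClique n (s.map f) :=
  h.map.mono (map_comap_le f G)

end SimpleGraph

theorem exists_isNClique_or_isNIndepSet_of_ramsey (i j : ℕ)
    (G : SimpleGraph (Fin (ramsey i j))) : ∃ s, G.IsNClique j s ∨ G.IsNIndepSet i s := by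
  have hramsey := Nat.sInf_mem (s := {n | ∀ G : SimpleGraph (Fin n),
      (∃ s : Finset (Fin n), G.IsNClique j s) ∨
      (∃ s : Finset (Fin n), s.card = i ∧ ∀ a ∈ s, ∀ b ∈ s, a ≠ b → ¬ G.Adj a b)})
    ⟨(i + j).choose i, fun H => ?_⟩
  · obtain ⟨s, hs⟩ | ⟨s, hcard, hind⟩ := hramsey G
    · exact ⟨s, Or.inl hs⟩
    · exact ⟨s, Or.inr ⟨fun a ha b hb => hind a ha b hb, hcard⟩⟩
  · obtain ⟨s, -, hc | hi⟩ := H.exists_subset_isNClique_or_isNIndepSet i j univ (by simp)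
    exacts [Or.inl ⟨s, hc⟩, Or.inr ⟨s, hi.card_eq, fun a ha b hb => hi.isIndepSet ha hb⟩]

theorem colorable_gChi [Fintype V] (G : SimpleGraph V) : G.Colorable (gChi G) :=
  Nat.sInf_mem (s := {n | G.Colorable n}) ⟨_, G.colorable_of_fintype⟩

theorem not_isNClique_gOmega_add_one [Fintype V] (G : SimpleGraph V) (s : Finset V) :
    ¬ G.IsNClique (gOmega G + 1) s := by
  intro hs
  have : gOmega G + 1 ≤ gOmega G :=
    le_csSup ⟨Fintype.card V, fun _ ⟨t, ht⟩ => ht.card_eq ▸ t.card_le_univ⟩ ⟨s, hs⟩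
  omega

namespace Dig

variable (D : Dig V)

def underlying : SimpleGraph V := SimpleGraph.fromRel D.Adj

theorem not_isNIndepSet_alpha_add_one [Fintype V] (s : Finset V) :
    ¬ D.underlying.IsNIndepSet (D.alpha + 1) s := by
  intro hs
  have hind : ∀ a ∈ s, ∀ b ∈ s, ¬ D.Adj a b := fun a ha b hb hab => by
    have hne : a ≠ b := by rintro rfl; exact D.irrefl a hab
    exact hs.isIndepSet ha hb hne ⟨hne, Or.inl hab⟩
  have : D.alpha + 1 ≤ D.alpha :=
    le_csSup ⟨Fintype.card V, fun _ ⟨t, ht, _⟩ => ht ▸ t.card_le_univ⟩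
      ⟨s, hs.card_eq, hind⟩
  omega

theorem lt_ramsey_of_adj_imp_backedge_adj [Fintype V] (r : V → V → Prop) {n : ℕ}
    (f : Fin n ↪ V) (hf : ∀ i j, D.Adj (f i) (f j) → (D.backedge r).Adj (f i) (f j)) :
    n < ramsey (gOmega (D.backedge r) + 1) (D.alpha + 1) := by
  by_contra! hle
  let e := (Fin.castLEEmb hle).trans f
  have he : D.underlying.comap e ≤ (D.backedge r).comap e := by
    rintro a b ⟨-, hab | hba⟩
    exacts [hf _ _ hab, (hf _ _ hba).symm]
  obtain ⟨s, hs | hs⟩ := exists_isNClique_or_isNIndepSet_of_ramsey _ _ (D.underlying.comap e)ᶜ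
  · exact D.not_isNIndepSet_alpha_add_one _ ((isNClique_compl _).1 hs).map_of_comap
  · exact not_isNClique_gOmega_add_one _ _ (((isNIndepSet_compl _).1 hs).mono he).map_of_comap

variable {D}

theorem acyclicOn_of_forall_adj {S : Set V} (s : V → V → Prop) [IsStrictOrder V s]
    (h : ∀ x ∈ S, ∀ y ∈ S, D.Adj x y → s x y) : D.AcyclicOn S := by
  intro v hv
  have := Relation.TransGen.mono (p := s) (fun x y hxy => h x hxy.1 y hxy.2.1 hxy.2.2) v v hv
  rw [Relation.transGen_eq_self] at this
  exact _root_.irrefl v this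

theorem acyclicOn_of_subsingleton {S : Set V} (hS : S.Subsingleton) : D.AcyclicOn S := by
  intro v hv
  obtain ⟨w, ⟨hv, hw, hvw⟩, -⟩ := Relation.TransGen.head'_iff.1 hv
  rw [hS hv hw] at hvw
  exact D.irrefl w hvw

variable (D)

theorem exists_acyclicOn_coloring_dichi [Fintype V] :
    ∃ c : V → Fin D.dichi, ∀ i, D.AcyclicOn {v | c v = i} :=
  Nat.sInf_mem (s := {n | ∃ c : V → Fin n, ∀ i, D.AcyclicOn {v | c v = i}})
    ⟨Fintype.card V, Fintype.equivFin V, fun _ => acyclicOn_of_subsingleton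
      fun _ hx _ hy => (Fintype.equivFin V).injective (hx.trans hy.symm)⟩

theorem dichi_le_gChi_backedge [Fintype V] (r : V → V → Prop) [IsStrictTotalOrder V r] :
    D.dichi ≤ gChi (D.backedge r) := by
  obtain ⟨C⟩ := colorable_gChi (D.backedge r)
  refine Nat.sInf_le ⟨C, fun i => acyclicOn_of_forall_adj r fun x hx y hy hxy => ?_⟩
  rcases trichotomous_of r x y with h | rfl | h
  · exact h
  · exact (D.irrefl x hxy).elim
  · exact (C.valid (Or.inr ⟨h, hxy⟩) (hx.trans hy.symm)).elim

def BackReach (r : V → V → Prop) {ι : Type*} (c : V → ι) : V → V → Prop :=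
  Relation.TransGen fun x y => c x = c y ∧ D.Adj x y ∧ r y x

variable {D} {r : V → V → Prop} {ι : Type*} {c : V → ι} {x y : V}

theorem BackReach.color_eq_and_transGen (h : D.BackReach r c x y) :
    c x = c y ∧ Relation.TransGen (fun a b => a ∈ {w | c w = c x} ∧ b ∈ {w | c w = c x} ∧
      D.Adj a b) x y := by
  induction h with
  | single h => exact ⟨h.1, .single ⟨rfl, h.1.symm, h.2.1⟩⟩
  | tail _ h ih =>
    exact ⟨ih.1.trans h.1, ih.2.tail ⟨ih.1.symm, (ih.1.trans h.1).symm, h.2.1⟩⟩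

theorem BackReach.rel [IsTrans V r] (h : D.BackReach r c x y) : r y x := by
  induction h with
  | single h => exact h.2.2
  | tail _ h ih => exact _root_.trans h.2.2 ih

theorem BackReach.not_adj (hc : ∀ i, D.AcyclicOn {v | c v = i}) (h : D.BackReach r c x y) :
    ¬ D.Adj y x := fun hyx =>
  have ⟨hxy, hpath⟩ := h.color_eq_and_transGen
  hc (c x) x (hpath.tail ⟨hxy.symm, rfl, hyx⟩)

theorem isStrictOrder_backReach (hc : ∀ i, D.AcyclicOn {v | c v = i}) :
    IsStrictOrder V (D.BackReach r c) where
  irrefl x h := hc (c x) x h.color_eq_and_transGen.2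
  trans _ _ _ := Relation.TransGen.trans

theorem backReach_or_of_backedge_adj (h : (D.backedge r).Adj x y) (hc : c x = c y) :
    D.BackReach r c y x ∨ D.BackReach r c x y := by
  rcases h with ⟨hr, hyx⟩ | ⟨hr, hxy⟩
  exacts [.inl (.single ⟨hc.symm, hyx, hr⟩), .inr (.single ⟨hc, hxy, hr⟩)]

variable (D r)

theorem gChi_backedge_le [Fintype V] [IsTrans V r] :
    gChi (D.backedge r) ≤ ramsey (gOmega (D.backedge r) + 1) (D.alpha + 1) * D.dichi := by
  obtain ⟨c, hc⟩ := D.exists_acyclicOn_coloring_dichi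
  have := isStrictOrder_backReach (r := r) hc
  -- from here on, `<` on `V` is `D.BackReach r c`
  let := partialOrderOfSO (D.BackReach r c)
  obtain ⟨g, hg⟩ := exists_strictMono_fin_of_card_chain_le fun k f hf =>
    (D.lt_ramsey_of_adj_imp_backedge_adj r ⟨f, hf.injective⟩ fun i j hadj => by
      rcases lt_trichotomy i j with hij | rfl | hij
      · exact .inr ⟨BackReach.rel (hf hij), hadj⟩
      · exact (D.irrefl _ hadj).elim
      · exact (BackReach.not_adj hc (hf hij) hadj).elim).le
  let C : (D.backedge r).Coloring (Fin _ × Fin D.dichi) :=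
    Coloring.mk (fun v => (g v, c v)) fun {u v} huv heq => by
      obtain ⟨hgv, hcv⟩ := Prod.ext_iff.1 heq
      rcases backReach_or_of_backedge_adj huv hcv with h | h
      exacts [(hg h).ne' hgv, (hg h).ne hgv]
  exact Nat.sInf_le (by simpa using C.colorable)

end Dig

/-- For every digraph `D` and total order `r` on its vertices,
`χ⃗(D) ≤ χ(D^r)` and `χ(D^r) ≤ R(ω(D^r)+1, α(D)+1) · χ⃗(D)`. -/
theorem stmt_19 (V : Type) [Fintype V] (D : Dig V) (r : V → V → Prop)
    (hr : IsStrictTotalOrder V r) :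
    D.dichi ≤ gChi (D.backedge r) ∧
      gChi (D.backedge r) ≤ ramsey (gOmega (D.backedge r) + 1) (D.alpha + 1) * D.dichi :=
  ⟨D.dichi_le_gChi_backedge r, D.gChi_backedge_le r⟩
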